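/- For |q| < 1, one has ∑_{n≥0} q^{n^2+n} (-q;q^2)_n / (q^2;q^2)_n = 1 / ((q^2;q^8)_∞ (q^3;q^8)_∞ (q^7;q^8)_∞). -/

import Mathlib

/-!
By the finite q-binomial theorem, `(-q; q²)_n / (q²; q²)_n = ∑_{k+m=n} q^{k²} / ((q²; q²)_k (q²; q²)_m)`,
so the series is a double series over `(k, m)`. Summing over `m` first with Euler's identity
`∑_m Q^{m(m-1)/2} x^m / (Q; Q)_m = (-x; Q)_∞` (at `Q = q²`, `x = q^{2k+2}`) leaves
`(-q²; q²)_∞ ∑_k q^{2k²+k} / (q⁴; q⁴)_k`, and Euler's identity again (at `Q = q⁴`, `x = q³`) gives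
`(-q²; q²)_∞ (-q³; q⁴)_∞`. This equals the product side by `(a; Q)_∞ (-a; Q)_∞ = (a²; Q²)_∞` and
`(a; Q)_∞ = (a; Q²)_∞ (aQ; Q²)_∞`. Euler's identity itself is the limit `n → ∞` of the finite
q-binomial theorem, by Tannery's theorem.
-/

open Finset

noncomputable def qPoch (a q : ℂ) (n : ℕ) : ℂ := ∏ k ∈ Finset.range n, (1 - a * q ^ k)

noncomputable def qPochInf (a q : ℂ) : ℂ := ∏' k : ℕ, (1 - a * q ^ k)

open Filter Topology

lemma Nat.two_mul_choose_two_add_self (n : ℕ) : 2 * n.choose 2 + n = n ^ 2 := by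
  induction n with
  | zero => rfl
  | succ n ih => rw [Nat.choose_succ_succ', Nat.choose_one_right]; linarith

lemma Summable.tsum_sum_antidiagonal {E : Type*} [NormedAddCommGroup E] [CompleteSpace E]
    {f : ℕ × ℕ → E} (hf : Summable f) :
    ∑' n, ∑ p ∈ antidiagonal n, f p = ∑' k, ∑' m, f (k, m) := by
  have hσ := (HasAntidiagonal.sigmaAntidiagonalEquivProd.summable_iff).2 hf
  rw [← hf.tsum_prod, ← HasAntidiagonal.sigmaAntidiagonalEquivProd.tsum_eq]
  exact (tsum_congr fun n => (Finset.tsum_subtype _ f).symm).trans hσ.tsum_sigma.symm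

lemma norm_pow_lt_one {𝕜 : Type*} [NormedDivisionRing 𝕜] {q : 𝕜} (hq : ‖q‖ < 1) {n : ℕ}
    (hn : n ≠ 0) : ‖q ^ n‖ < 1 := by
  rw [norm_pow]
  exact pow_lt_one₀ (norm_nonneg q) hq hn

lemma norm_pow_le_pow_of_le {𝕜 : Type*} [NormedDivisionRing 𝕜] {q : 𝕜} (hq : ‖q‖ ≤ 1) {m n : ℕ}
    (h : m ≤ n) : ‖q ^ n‖ ≤ ‖q‖ ^ m := by
  rw [norm_pow]
  exact pow_le_pow_of_le_one (norm_nonneg q) hq h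

section QPochhammer

variable {a Q x : ℂ}

@[simp] lemma qPoch_zero (a Q : ℂ) : qPoch a Q 0 = 1 := prod_range_zero _

lemma qPoch_succ (a Q : ℂ) (n : ℕ) : qPoch a Q (n + 1) = qPoch a Q n * (1 - a * Q ^ n) :=
  prod_range_succ _ _

lemma qPoch_mul_qPoch_neg (a Q : ℂ) (n : ℕ) :
    qPoch a Q n * qPoch (-a) Q n = qPoch (a ^ 2) (Q ^ 2) n := by
  simp only [qPoch, ← prod_mul_distrib]
  exact prod_congr rfl fun k _ => by ring

lemma one_sub_mul_pow_ne_zero (ha : ‖a‖ < 1) (hQ : ‖Q‖ ≤ 1) (k : ℕ) : 1 - a * Q ^ k ≠ 0 := by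
  have : ‖a * Q ^ k‖ < 1 := by
    rw [norm_mul, norm_pow]
    exact (mul_le_of_le_one_right (norm_nonneg a) (pow_le_one₀ (norm_nonneg Q) hQ)).trans_lt ha
  rw [sub_ne_zero]
  intro h
  simp [← h] at this

lemma qPoch_ne_zero (ha : ‖a‖ < 1) (hQ : ‖Q‖ ≤ 1) (n : ℕ) : qPoch a Q n ≠ 0 :=
  prod_ne_zero_iff.2 fun k _ => one_sub_mul_pow_ne_zero ha hQ k

lemma summable_norm_neg_mul_pow (a : ℂ) (hQ : ‖Q‖ < 1) :
    Summable fun k : ℕ => ‖-(a * Q ^ k)‖ := by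
  simpa [norm_mul, norm_pow] using (summable_geometric_of_lt_one (norm_nonneg Q) hQ).mul_left ‖a‖

lemma multipliable_one_sub_mul_pow (a : ℂ) (hQ : ‖Q‖ < 1) :
    Multipliable fun k : ℕ => 1 - a * Q ^ k := by
  simpa [← sub_eq_add_neg] using multipliable_one_add_of_summable (summable_norm_neg_mul_pow a hQ)

lemma tendsto_qPoch (a : ℂ) (hQ : ‖Q‖ < 1) : Tendsto (qPoch a Q) atTop (𝓝 (qPochInf a Q)) :=
  (multipliable_one_sub_mul_pow a hQ).hasProd.tendsto_prod_nat

lemma qPochInf_ne_zero (ha : ‖a‖ < 1) (hQ : ‖Q‖ < 1) : qPochInf a Q ≠ 0 := by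
  simpa [qPochInf, ← sub_eq_add_neg] using tprod_one_add_ne_zero_of_summable
    (fun k => by simpa [← sub_eq_add_neg] using one_sub_mul_pow_ne_zero ha hQ.le k)
    (summable_norm_neg_mul_pow a hQ)

lemma exists_norm_inv_qPoch_le (ha : ‖a‖ < 1) (hQ : ‖Q‖ < 1) :
    ∃ C, ∀ n, ‖(qPoch a Q n)⁻¹‖ ≤ C := by
  obtain ⟨C, hC⟩ := isBounded_iff_forall_norm_le.1 <| Metric.isBounded_range_of_tendsto _
    ((tendsto_qPoch a hQ).inv₀ (qPochInf_ne_zero ha hQ))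
  exact ⟨C, fun n => hC _ ⟨n, rfl⟩⟩

lemma qPoch_mul_qPochInf_mul_pow (a : ℂ) (hQ : ‖Q‖ < 1) (n : ℕ) :
    qPoch a Q n * qPochInf (a * Q ^ n) Q = qPochInf a Q := by
  have h : Multipliable fun k : ℕ => 1 - a * Q ^ (k + n) :=
    (multipliable_one_sub_mul_pow (a * Q ^ n) hQ).congr fun k => by ring
  have htail : qPochInf (a * Q ^ n) Q = ∏' k : ℕ, (1 - a * Q ^ (k + n)) :=
    tprod_congr fun k => by ring
  rw [htail, qPoch, qPochInf]
  exact Multipliable.prod_mul_tprod_nat_mul' (f := fun k => 1 - a * Q ^ k) h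

lemma qPochInf_mul_qPochInf_neg (a : ℂ) (hQ : ‖Q‖ < 1) :
    qPochInf a Q * qPochInf (-a) Q = qPochInf (a ^ 2) (Q ^ 2) := by
  rw [qPochInf, qPochInf, qPochInf, ← (multipliable_one_sub_mul_pow a hQ).tprod_mul
    (multipliable_one_sub_mul_pow (-a) hQ)]
  exact tprod_congr fun k => by ring

lemma qPochInf_eq_mul_qPochInf_sq (a : ℂ) (hQ : ‖Q‖ < 1) :
    qPochInf a Q = qPochInf a (Q ^ 2) * qPochInf (a * Q) (Q ^ 2) := by
  have hQ2 := norm_pow_lt_one hQ two_ne_zero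
  have he : Multipliable fun k : ℕ => 1 - a * Q ^ (2 * k) :=
    (multipliable_one_sub_mul_pow a hQ2).congr fun k => by ring
  have ho : Multipliable fun k : ℕ => 1 - a * Q ^ (2 * k + 1) :=
    (multipliable_one_sub_mul_pow (a * Q) hQ2).congr fun k => by ring
  rw [qPochInf, ← tprod_even_mul_odd (f := fun k => 1 - a * Q ^ k) he ho]
  congr 1 <;> exact tprod_congr fun k => by ring

lemma qPochInf_neg_mul_qPochInf_sq (hQ : ‖Q‖ < 1) : qPochInf (-Q) Q * qPochInf Q (Q ^ 2) = 1 := by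
  have hQ2 := norm_pow_lt_one hQ two_ne_zero
  apply mul_right_cancel₀ (qPochInf_ne_zero hQ2 hQ2)
  have hsplit := qPochInf_eq_mul_qPochInf_sq Q hQ
  rw [← sq] at hsplit
  conv_rhs => rw [one_mul, ← qPochInf_mul_qPochInf_neg Q hQ, hsplit]
  ring

lemma qPoch_neg_div_qPoch_eq_sum_antidiagonal (hQ : ‖Q‖ < 1) (x : ℂ) (n : ℕ) :
    qPoch (-x) Q n / qPoch Q Q n =
      ∑ p ∈ antidiagonal n, Q ^ p.1.choose 2 * x ^ p.1 / (qPoch Q Q p.1 * qPoch Q Q p.2) := by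
  set f : ℕ × ℕ → ℂ := fun p => Q ^ p.1.choose 2 * x ^ p.1 / (qPoch Q Q p.1 * qPoch Q Q p.2)
  have hP := qPoch_ne_zero hQ hQ.le
  have hF := one_sub_mul_pow_ne_zero hQ hQ.le
  have hdown (k m : ℕ) : (1 - Q * Q ^ m) * f (k, m + 1) = f (k, m) := by
    simp only [f, qPoch_succ]
    field_simp [hP, hF]
  have hleft (k m : ℕ) : Q ^ m * (1 - Q * Q ^ k) * f (k + 1, m) = x * Q ^ (k + m) * f (k, m) := by
    simp only [f, qPoch_succ, Nat.choose_succ_succ', Nat.choose_one_right]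
    field_simp [hP, hF]
    ring
  -- On the antidiagonal `k + m = n + 1`, `1 - Q ^ (n + 1) = (1 - Q ^ m) + Q ^ m * (1 - Q ^ k)`.
  have hrec (n : ℕ) : (1 - Q * Q ^ n) * ∑ p ∈ antidiagonal (n + 1), f p
      = (1 + x * Q ^ n) * ∑ p ∈ antidiagonal n, f p := by
    calc (1 - Q * Q ^ n) * ∑ p ∈ antidiagonal (n + 1), f p
        = ∑ p ∈ antidiagonal (n + 1), (1 - Q ^ p.2) * f p
          + ∑ p ∈ antidiagonal (n + 1), Q ^ p.2 * (1 - Q ^ p.1) * f p := by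
          rw [mul_sum, ← sum_add_distrib]
          refine sum_congr rfl fun p hp => ?_
          rw [← pow_succ', ← mem_antidiagonal.1 hp, pow_add]
          ring
      _ = ∑ p ∈ antidiagonal n, f p + ∑ p ∈ antidiagonal n, x * Q ^ n * f p := by
          rw [Nat.sum_antidiagonal_succ', Nat.sum_antidiagonal_succ]
          simp only [pow_zero, sub_self, zero_mul, mul_zero, zero_add]
          congr 1
          · exact sum_congr rfl fun p _ => by rw [pow_succ', hdown]
          · exact sum_congr rfl fun p hp => by rw [pow_succ', hleft, mem_antidiagonal.1 hp]
      _ = (1 + x * Q ^ n) * ∑ p ∈ antidiagonal n, f p := by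
          rw [← mul_sum]
          ring
  induction n with
  | zero => simp [f]
  | succ n ih =>
    rw [← mul_right_inj' (hF n), hrec, ← ih, qPoch_succ, qPoch_succ]
    field_simp [hP, hF]
    ring

theorem hasSum_qPochInf_neg (hQ : ‖Q‖ < 1) (hx : ‖x‖ < 1) :
    HasSum (fun k => Q ^ k.choose 2 * x ^ k / qPoch Q Q k) (qPochInf (-x) Q) := by
  set u : ℕ → ℂ := fun k => Q ^ k.choose 2 * x ^ k / qPoch Q Q k
  have hP := qPochInf_ne_zero hQ hQ
  obtain ⟨C, hC⟩ := exists_norm_inv_qPoch_le hQ hQ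
  have hC0 : 0 ≤ C := (norm_nonneg _).trans (hC 0)
  have hu (k : ℕ) : ‖u k‖ ≤ C * ‖x‖ ^ k := by
    simp only [u]
    rw [div_eq_mul_inv, norm_mul, norm_mul, norm_pow, norm_pow, mul_comm C]
    gcongr
    · exact mul_le_of_le_one_left (by positivity) (pow_le_one₀ (norm_nonneg Q) hQ.le)
    · exact hC k
  have hgeom := summable_geometric_of_lt_one (norm_nonneg x) hx
  have hsum : Summable u := .of_norm_bounded (hgeom.mul_left C) hu
  -- `∑' k, F n k` is the finite q-binomial sum; Tannery's theorem lets `n → ∞` termwise.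
  set F : ℕ → ℕ → ℂ := fun n k => if k ≤ n then u k * (qPoch Q Q (n - k))⁻¹ else 0
  have hF (n : ℕ) : ∑' k, F n k = qPoch (-x) Q n / qPoch Q Q n := by
    rw [qPoch_neg_div_qPoch_eq_sum_antidiagonal hQ, Nat.sum_antidiagonal_eq_sum_range_succ_mk,
      tsum_eq_sum (s := range (n + 1)) fun k hk => if_neg (by simpa [Nat.lt_succ_iff] using hk)]
    refine sum_congr rfl fun k hk => ?_
    rw [if_pos (Nat.lt_succ_iff.1 (mem_range.1 hk))]
    ring
  have hlim : Tendsto (fun n => ∑' k, F n k) atTop (𝓝 (∑' k, u k * (qPochInf Q Q)⁻¹)) := by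
    refine tendsto_tsum_of_dominated_convergence (hgeom.mul_left C |>.mul_right C)
      (fun k => ?_) (.of_forall fun n k => ?_)
    · refine Tendsto.congr' (f₁ := fun n => u k * (qPoch Q Q (n - k))⁻¹) ?_ ?_
      · filter_upwards [eventually_ge_atTop k] with n hn
        simp [F, hn]
      · exact (((tendsto_qPoch Q hQ).comp (tendsto_sub_atTop_nat k)).inv₀ hP).const_mul _
    · simp only [F]
      split_ifs
      · rw [norm_mul]
        exact mul_le_mul (hu k) (hC _) (norm_nonneg _) (by positivity)
      · rw [norm_zero]
        positivity
  simp_rw [hF, tsum_mul_right] at hlim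
  have := tendsto_nhds_unique hlim ((tendsto_qPoch (-x) hQ).div (tendsto_qPoch Q hQ) hP)
  exact hsum.hasSum_iff.2 (mul_right_cancel₀ (inv_ne_zero hP) (this.trans (div_eq_mul_inv _ _)))

end QPochhammer

section Gollnitz

variable {q : ℂ}

lemma qPochInf_neg_mul_qPochInf_neg_eq_one_div (hq : ‖q‖ < 1) :
    qPochInf (-(q ^ 2)) (q ^ 2) * qPochInf (-(q ^ 3)) (q ^ 4) =
      1 / (qPochInf (q ^ 2) (q ^ 8) * qPochInf (q ^ 3) (q ^ 8) * qPochInf (q ^ 7) (q ^ 8)) := by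
  have h (n : ℕ) (hn : n ≠ 0) := norm_pow_lt_one hq hn
  have e₁ : qPochInf (-(q ^ 2)) (q ^ 2) * qPochInf (q ^ 2) (q ^ 4) = 1 := by
    simpa [← pow_mul] using qPochInf_neg_mul_qPochInf_sq (h 2 two_ne_zero)
  have e₂ : qPochInf (q ^ 2) (q ^ 4) = qPochInf (q ^ 2) (q ^ 8) * qPochInf (q ^ 6) (q ^ 8) := by
    convert qPochInf_eq_mul_qPochInf_sq (q ^ 2) (h 4 four_ne_zero) using 2 <;> ring_nf
  have e₃ : qPochInf (-(q ^ 3)) (q ^ 4) =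
      qPochInf (-(q ^ 3)) (q ^ 8) * qPochInf (-(q ^ 7)) (q ^ 8) := by
    convert qPochInf_eq_mul_qPochInf_sq (-(q ^ 3)) (h 4 four_ne_zero) using 2 <;> ring_nf
  have e₄ : qPochInf (q ^ 3) (q ^ 8) * qPochInf (-(q ^ 3)) (q ^ 8) = qPochInf (q ^ 6) (q ^ 16) := by
    convert qPochInf_mul_qPochInf_neg (q ^ 3) (h 8 (by norm_num)) using 2 <;> ring_nf
  have e₅ : qPochInf (q ^ 7) (q ^ 8) * qPochInf (-(q ^ 7)) (q ^ 8) =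
      qPochInf (q ^ 14) (q ^ 16) := by
    convert qPochInf_mul_qPochInf_neg (q ^ 7) (h 8 (by norm_num)) using 2 <;> ring_nf
  have e₆ : qPochInf (q ^ 6) (q ^ 8) = qPochInf (q ^ 6) (q ^ 16) * qPochInf (q ^ 14) (q ^ 16) := by
    convert qPochInf_eq_mul_qPochInf_sq (q ^ 6) (h 8 (by norm_num)) using 2 <;> ring_nf
  have hne (n : ℕ) (hn : n ≠ 0) : qPochInf (q ^ n) (q ^ 8) ≠ 0 :=
    qPochInf_ne_zero (h n hn) (h 8 (by norm_num))
  rw [eq_div_iff (by simp [hne])]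
  calc _ = qPochInf (-(q ^ 2)) (q ^ 2) * qPochInf (q ^ 2) (q ^ 8) *
        ((qPochInf (q ^ 3) (q ^ 8) * qPochInf (-(q ^ 3)) (q ^ 8)) *
          (qPochInf (q ^ 7) (q ^ 8) * qPochInf (-(q ^ 7)) (q ^ 8))) := by
        rw [e₃]
        ring
    _ = 1 := by rw [e₄, e₅, ← e₆, mul_assoc, ← e₂, e₁]

/-- The `(k, m)` term of the double series, as a prefactor times the `m`-th term of Euler's series
with `Q = q²`, `x = q ^ (2k + 2)`. -/
noncomputable def gollnitzTerm (q : ℂ) (p : ℕ × ℕ) : ℂ :=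
  q ^ (2 * p.1 ^ 2 + p.1) / qPoch (q ^ 2) (q ^ 2) p.1 *
    ((q ^ 2) ^ p.2.choose 2 * (q ^ (2 * p.1 + 2)) ^ p.2 / qPoch (q ^ 2) (q ^ 2) p.2)

lemma sum_antidiagonal_gollnitzTerm (hq : ‖q‖ < 1) (n : ℕ) :
    ∑ p ∈ antidiagonal n, gollnitzTerm q p =
      q ^ (n ^ 2 + n) * qPoch (-q) (q ^ 2) n / qPoch (q ^ 2) (q ^ 2) n := by
  rw [mul_div_assoc, qPoch_neg_div_qPoch_eq_sum_antidiagonal (norm_pow_lt_one hq two_ne_zero),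
    mul_sum]
  refine sum_congr rfl fun ⟨k, m⟩ hp => ?_
  rw [← mem_antidiagonal.1 hp]
  have hexp : q ^ ((k + m) ^ 2 + (k + m)) * ((q ^ 2) ^ k.choose 2 * q ^ k)
      = q ^ (2 * k ^ 2 + k) * ((q ^ 2) ^ m.choose 2 * (q ^ (2 * k + 2)) ^ m) := by
    simp only [← pow_mul, ← pow_add]
    congr 1
    nlinarith [Nat.two_mul_choose_two_add_self k, Nat.two_mul_choose_two_add_self m]
  rw [gollnitzTerm, div_mul_div_comm, ← hexp]
  ring

lemma summable_gollnitzTerm (hq : ‖q‖ < 1) : Summable (gollnitzTerm q) := by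
  have hq2 := norm_pow_lt_one hq two_ne_zero
  obtain ⟨C, hC⟩ := exists_norm_inv_qPoch_le hq2 hq2
  have hC0 : 0 ≤ C := (norm_nonneg _).trans (hC 0)
  have hgeom := summable_geometric_of_lt_one (norm_nonneg q) hq
  refine .of_norm_bounded (g := fun p => C * ‖q‖ ^ p.1 * (C * ‖q‖ ^ p.2))
    ((hgeom.mul_left C).mul_of_nonneg (hgeom.mul_left C) (fun _ => by positivity)
      (fun _ => by positivity)) fun ⟨k, m⟩ => ?_
  simp only [gollnitzTerm, div_eq_mul_inv, norm_mul]
  have h₁ : ‖q ^ (2 * k ^ 2 + k)‖ ≤ ‖q‖ ^ k := norm_pow_le_pow_of_le hq.le (by omega)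
  have h₂ : ‖(q ^ 2) ^ m.choose 2‖ ≤ 1 := by
    rw [norm_pow]
    exact pow_le_one₀ (norm_nonneg _) hq2.le
  have h₃ : ‖(q ^ (2 * k + 2)) ^ m‖ ≤ ‖q‖ ^ m := by
    rw [← pow_mul]
    exact norm_pow_le_pow_of_le hq.le (Nat.le_mul_of_pos_left m (by omega))
  have hCk := hC k
  have hCm := hC m
  calc _ ≤ ‖q‖ ^ k * C * (1 * ‖q‖ ^ m * C) := by gcongr
    _ = C * ‖q‖ ^ k * (C * ‖q‖ ^ m) := by ring

lemma tsum_gollnitzTerm_right (hq : ‖q‖ < 1) (k : ℕ) :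
    ∑' m, gollnitzTerm q (k, m) = qPochInf (-(q ^ 2)) (q ^ 2) *
      ((q ^ 4) ^ k.choose 2 * (q ^ 3) ^ k / qPoch (q ^ 4) (q ^ 4) k) := by
  have hq2 := norm_pow_lt_one hq two_ne_zero
  simp only [gollnitzTerm]
  rw [tsum_mul_left, (hasSum_qPochInf_neg hq2 (norm_pow_lt_one hq (by omega))).tsum_eq]
  have hshift : -(q ^ (2 * k + 2)) = -(q ^ 2) * (q ^ 2) ^ k := by ring
  have hsq : qPoch (q ^ 4) (q ^ 4) k = qPoch (q ^ 2) (q ^ 2) k * qPoch (-(q ^ 2)) (q ^ 2) k := by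
    rw [qPoch_mul_qPoch_neg]
    ring_nf
  have hexp : q ^ (2 * k ^ 2 + k) = (q ^ 4) ^ k.choose 2 * (q ^ 3) ^ k := by
    simp only [← pow_mul, ← pow_add]
    congr 1
    nlinarith [Nat.two_mul_choose_two_add_self k]
  rw [hshift, ← qPoch_mul_qPochInf_mul_pow (-(q ^ 2)) hq2 k, hsq, hexp]
  have := qPoch_ne_zero hq2 hq2.le k
  have := qPoch_ne_zero (a := -(q ^ 2)) (by rwa [norm_neg]) hq2.le k
  field_simp

theorem tsum_eq_qPochInf_neg_mul_qPochInf_neg (hq : ‖q‖ < 1) :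
    ∑' n : ℕ, q ^ (n ^ 2 + n) * qPoch (-q) (q ^ 2) n / qPoch (q ^ 2) (q ^ 2) n
      = qPochInf (-(q ^ 2)) (q ^ 2) * qPochInf (-(q ^ 3)) (q ^ 4) := by
  calc _ = ∑' n, ∑ p ∈ antidiagonal n, gollnitzTerm q p :=
        tsum_congr fun n => (sum_antidiagonal_gollnitzTerm hq n).symm
    _ = ∑' k, ∑' m, gollnitzTerm q (k, m) := (summable_gollnitzTerm hq).tsum_sum_antidiagonal
    _ = _ := by
      rw [tsum_congr (tsum_gollnitzTerm_right hq), tsum_mul_left,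
        (hasSum_qPochInf_neg (norm_pow_lt_one hq four_ne_zero)
          (norm_pow_lt_one hq three_ne_zero)).tsum_eq]

end Gollnitz

theorem stmt7 (q : ℂ) (hq : ‖q‖ < 1) :
    ∑' n : ℕ, (q ^ (n ^ 2 + n) * qPoch (-q) (q ^ 2) n / qPoch (q ^ 2) (q ^ 2) n)
    = 1 / (qPochInf (q ^ 2) (q ^ 8) * qPochInf (q ^ 3) (q ^ 8) * qPochInf (q ^ 7) (q ^ 8)) := by
  rw [tsum_eq_qPochInf_neg_mul_qPochInf_neg hq, qPochInf_neg_mul_qPochInf_neg_eq_one_div hq]
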